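/- arXiv:1406.6528 — 2 statements merged into one kernel-verified Lean document; each statement's English description precedes it below -/
import Mathlib

section
/- Let H : H₁ → H₀ be a subcrossed module of a crossed module G : G₁ → G₀ such that G₁ = H₁·G₁^{G₀} and G₀ = H₀·(St_{G₀}(G₁) ∩ Z(G₀)). Then St_{H₀}(H₁) ∩ Z(H₀) = H₀ ∩ (St_{G₀}(G₁) ∩ Z(G₀)), as subsets of G₀. -/
open scoped commutatorElement

/-- A crossed module `d : G₁ → G₀` with action `act : G₀ → Aut(G₁)`. -/
structure XMod (G₁ G₀ : Type*) [Group G₁] [Group G₀] where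
  d : G₁ →* G₀
  act : G₀ →* MulAut G₁
  cm1 : ∀ (g₀ : G₀) (g₁ : G₁), d (act g₀ g₁) = g₀ * d g₁ * g₀⁻¹
  cm2 : ∀ (g₁ g₁' : G₁), act (d g₁) g₁' = g₁ * g₁' * g₁⁻¹

/-- The commutator `⁅x, y⁆` lies in the commutator subgroup. -/
lemma mem_commutator_of {G : Type*} [Group G] (x y : G) : ⁅x, y⁆ ∈ commutator G := by
  rw [commutator_def]
  exact Subgroup.commutator_mem_commutator (Subgroup.mem_top x) (Subgroup.mem_top y)

namespace XMod

variable {G₁ G₀ : Type*} [Group G₁] [Group G₀] (X : XMod G₁ G₀)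

lemma act_act (a b : G₀) (x : G₁) : X.act a (X.act b x) = X.act (a * b) x := by
  rw [map_mul]; rfl

lemma act_one (x : G₁) : X.act 1 x = x := by rw [map_one]; rfl

/-- The fixed-point subgroup `G₁^{G₀}`. -/
def fix : Subgroup G₁ where
  carrier := {g₁ | ∀ g₀ : G₀, X.act g₀ g₁ = g₁}
  one_mem' := fun g₀ => map_one (X.act g₀)
  mul_mem' := fun {a b} ha hb g₀ => by rw [map_mul, ha g₀, hb g₀]
  inv_mem' := fun {a} ha g₀ => by rw [map_inv, ha g₀]

lemma mem_fix {g₁ : G₁} : g₁ ∈ X.fix ↔ ∀ g₀ : G₀, X.act g₀ g₁ = g₁ := Iff.rfl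

/-- The stabilizer `St_{G₀}(G₁)`. -/
def stab : Subgroup G₀ where
  carrier := {g₀ | ∀ g₁ : G₁, X.act g₀ g₁ = g₁}
  one_mem' := fun g₁ => X.act_one g₁
  mul_mem' := fun {a b} ha hb g₁ => by rw [← X.act_act, hb g₁, ha g₁]
  inv_mem' := fun {a} ha g₁ => by
    have h := X.act_act a⁻¹ a g₁
    rw [ha g₁] at h
    simpa [X.act_one] using h

lemma mem_stab {g₀ : G₀} : g₀ ∈ X.stab ↔ ∀ g₁ : G₁, X.act g₀ g₁ = g₁ := Iff.rfl

/-- `St_{G₀}(G₁) ∩ Z(G₀)`. -/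
def zstab : Subgroup G₀ := X.stab ⊓ Subgroup.center G₀

lemma fix_le_center : X.fix ≤ Subgroup.center G₁ := fun h hh =>
  Subgroup.mem_center_iff.mpr fun g => by
    have h1 := X.cm2 g h
    rw [hh (X.d g)] at h1
    exact mul_inv_eq_iff_eq_mul.mp h1.symm

instance fix_normal : (X.fix).Normal := ⟨fun n hn g => by
  rw [Subgroup.mem_center_iff.mp (X.fix_le_center hn) g]
  simpa using hn⟩

instance zstab_normal : (X.zstab).Normal := ⟨fun n hn g => by
  rw [Subgroup.mem_center_iff.mp (Subgroup.mem_inf.mp hn).2 g]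
  simpa using hn⟩

/-- The displacement subgroup `D_{G₀}(G₁)`. -/
def disp : Subgroup G₁ :=
  Subgroup.closure {x | ∃ (g₀ : G₀) (g₁ : G₁), x = X.act g₀ g₁ * g₁⁻¹}

lemma disp_gen_mem (g₀ : G₀) (g₁ : G₁) : X.act g₀ g₁ * g₁⁻¹ ∈ X.disp :=
  Subgroup.subset_closure ⟨g₀, g₁, rfl⟩

lemma d_fix_mem {g₁ : G₁} (h : g₁ ∈ X.fix) : X.d g₁ ∈ X.zstab := by
  refine Subgroup.mem_inf.mpr ⟨fun x => ?_, Subgroup.mem_center_iff.mpr fun g₀ => ?_⟩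
  · rw [X.cm2, ← Subgroup.mem_center_iff.mp (X.fix_le_center h) x]
    simp
  · have h1 := X.cm1 g₀ g₁
    rw [h g₀] at h1
    exact mul_inv_eq_iff_eq_mul.mp h1.symm

lemma d_disp_mem {x : G₁} (h : x ∈ X.disp) : X.d x ∈ commutator G₀ := by
  induction h using Subgroup.closure_induction with
  | mem y hy =>
      obtain ⟨g₀, g₁, rfl⟩ := hy
      have h2 : X.d (X.act g₀ g₁ * g₁⁻¹) = ⁅g₀, X.d g₁⁆ := by
        rw [map_mul, map_inv, X.cm1, commutatorElement_def]
      rw [h2]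
      exact mem_commutator_of g₀ (X.d g₁)
  | one => simpa using (commutator G₀).one_mem
  | mul a b _ _ ha hb => rw [map_mul]; exact mul_mem ha hb
  | inv a _ ha => rw [map_inv]; exact inv_mem ha

/-- The boundary map induced on central quotients. -/
def dbar : G₁ ⧸ X.fix →* G₀ ⧸ X.zstab :=
  QuotientGroup.map X.fix X.zstab X.d (fun _ h => X.d_fix_mem h)

/-- The boundary map restricted to the displacement/commutator subgroups. -/
def dres : X.disp →* commutator G₀ :=
  (X.d.domRestrict X.disp).codRestrict (commutator G₀) fun x => X.d_disp_mem x.2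

variable {H₁ H₀ : Type*} [Group H₁] [Group H₀]

/-- Isoclinism of crossed modules. -/
def Isoclinic (X : XMod G₁ G₀) (Y : XMod H₁ H₀) : Prop :=
  ∃ (η₁ : (G₁ ⧸ X.fix) ≃* (H₁ ⧸ Y.fix))
    (η₀ : (G₀ ⧸ X.zstab) ≃* (H₀ ⧸ Y.zstab))
    (ξ₁ : X.disp ≃* Y.disp)
    (ξ₀ : commutator G₀ ≃* commutator H₀),
    (∀ q : G₁ ⧸ X.fix, Y.dbar (η₁ q) = η₀ (X.dbar q)) ∧
    (∀ x : X.disp, Y.dres (ξ₁ x) = ξ₀ (X.dres x)) ∧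
    (∀ (g₁ : G₁) (g₀ : G₀) (h₁ : H₁) (h₀ : H₀),
       η₁ (QuotientGroup.mk g₁) = QuotientGroup.mk h₁ →
       η₀ (QuotientGroup.mk g₀) = QuotientGroup.mk h₀ →
       (ξ₁ ⟨X.act g₀ g₁ * g₁⁻¹, X.disp_gen_mem g₀ g₁⟩ : H₁) = Y.act h₀ h₁ * h₁⁻¹) ∧
    (∀ (g₀ g₀' : G₀) (h₀ h₀' : H₀),
       η₀ (QuotientGroup.mk g₀) = QuotientGroup.mk h₀ →
       η₀ (QuotientGroup.mk g₀') = QuotientGroup.mk h₀' →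
       (ξ₀ ⟨⁅g₀, g₀'⁆, mem_commutator_of g₀ g₀'⟩ : H₀) = ⁅h₀, h₀'⁆)

end XMod

/-- Isoclinism of groups. -/
def IsoclinicGrp (M N : Type*) [Group M] [Group N] : Prop :=
  ∃ (η : (M ⧸ Subgroup.center M) ≃* (N ⧸ Subgroup.center N))
    (ξ : commutator M ≃* commutator N),
    ∀ (x y : M) (u v : N),
      η (QuotientGroup.mk x) = QuotientGroup.mk u →
      η (QuotientGroup.mk y) = QuotientGroup.mk v →
      (ξ ⟨⁅x, y⁆, mem_commutator_of x y⟩ : N) = ⁅u, v⁆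
namespace XMod

variable {G₁ G₀ : Type*} [Group G₁] [Group G₀] (X : XMod G₁ G₀)

/-- Auxiliary automorphism of `H₁` induced by `h₀ ∈ H₀`. -/
def raux (H₁ : Subgroup G₁) (H₀ : Subgroup G₀)
    (hact : ∀ h₀ ∈ H₀, ∀ h₁ ∈ H₁, X.act h₀ h₁ ∈ H₁) (h₀ : H₀) : H₁ ≃* H₁ where
  toFun h₁ := ⟨X.act h₀ h₁, hact h₀ h₀.2 h₁ h₁.2⟩
  invFun h₁ := ⟨X.act ((h₀ : G₀))⁻¹ h₁, hact _ (inv_mem h₀.2) h₁ h₁.2⟩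
  left_inv h₁ := Subtype.ext (by
    show X.act ((h₀ : G₀))⁻¹ (X.act (h₀ : G₀) h₁) = (h₁ : G₁)
    rw [X.act_act, inv_mul_cancel, X.act_one])
  right_inv h₁ := Subtype.ext (by
    show X.act (h₀ : G₀) (X.act ((h₀ : G₀))⁻¹ h₁) = (h₁ : G₁)
    rw [X.act_act, mul_inv_cancel, X.act_one])
  map_mul' a b := Subtype.ext (by
    show X.act (h₀ : G₀) ((a : G₁) * b) = X.act (h₀ : G₀) a * X.act (h₀ : G₀) b
    exact map_mul _ _ _)

/-- The subcrossed module of `X` determined by subgroups `H₁ ≤ G₁`, `H₀ ≤ G₀`. -/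
def restrict (H₁ : Subgroup G₁) (H₀ : Subgroup G₀)
    (hd : ∀ h ∈ H₁, X.d h ∈ H₀)
    (hact : ∀ h₀ ∈ H₀, ∀ h₁ ∈ H₁, X.act h₀ h₁ ∈ H₁) : XMod H₁ H₀ where
  d := {
    toFun := fun h => ⟨X.d h, hd h h.2⟩
    map_one' := Subtype.ext (by simp)
    map_mul' := fun a b => Subtype.ext (by simp) }
  act := {
    toFun := X.raux H₁ H₀ hact
    map_one' := MulEquiv.ext fun h₁ => Subtype.ext (by
      show X.act ((1 : H₀) : G₀) h₁ = (h₁ : G₁)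
      simp [X.act_one])
    map_mul' := fun a b => MulEquiv.ext fun h₁ => Subtype.ext (by
      show X.act (((a * b : H₀)) : G₀) h₁ = X.act (a : G₀) (X.act (b : G₀) h₁)
      rw [X.act_act]
      norm_cast) }
  cm1 := fun g₀ g₁ => Subtype.ext (by
    show X.d (X.act (g₀ : G₀) g₁) = (g₀ : G₀) * X.d g₁ * (g₀ : G₀)⁻¹
    exact X.cm1 _ _)
  cm2 := fun g₁ g₁' => Subtype.ext (by
    show X.act (X.d (g₁ : G₁)) g₁' = (g₁ : G₁) * g₁' * (g₁ : G₁)⁻¹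
    exact X.cm2 _ _)

end XMod

namespace Subgroup

variable {G : Type*} [Group G] {H : Subgroup G}

lemma mem_center_of_coe_mem_center {h : H} (hh : (h : G) ∈ center G) : h ∈ center H :=
  mem_center_iff.mpr fun x => Subtype.ext (mem_center_iff.mp hh x)

lemma coe_mem_center_of_forall_eq_mul {K : Subgroup G} (hK : K ≤ center G)
    (hG : ∀ g : G, ∃ x ∈ H, ∃ z ∈ K, g = x * z) {h : H} (hh : h ∈ center H) :
    (h : G) ∈ center G := by
  refine mem_center_iff.mpr fun g => ?_
  obtain ⟨x, hx, z, hz, rfl⟩ := hG g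
  have hxh : x * h = h * x := congrArg Subtype.val (mem_center_iff.mp hh ⟨x, hx⟩)
  have hzh : z * h = h * z := (mem_center_iff.mp (hK hz) h).symm
  rw [mul_assoc, hzh, ← mul_assoc, hxh, mul_assoc]

end Subgroup

namespace XMod

variable {G₁ G₀ : Type*} [Group G₁] [Group G₀] (X : XMod G₁ G₀)

lemma zstab_le_center : X.zstab ≤ Subgroup.center G₀ := inf_le_right

lemma mem_restrict_stab_iff {H₁ : Subgroup G₁} {H₀ : Subgroup G₀}
    (hd : ∀ h ∈ H₁, X.d h ∈ H₀) (hact : ∀ h₀ ∈ H₀, ∀ h₁ ∈ H₁, X.act h₀ h₁ ∈ H₁) {h₀ : H₀} :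
    h₀ ∈ (X.restrict H₁ H₀ hd hact).stab ↔ ∀ h₁ ∈ H₁, X.act h₀ h₁ = h₁ :=
  ⟨fun h h₁ hh₁ => congrArg Subtype.val (h ⟨h₁, hh₁⟩), fun h h₁ => Subtype.ext (h h₁ h₁.2)⟩

lemma mem_stab_of_forall_mem_eq_mul {H₁ : Subgroup G₁}
    (hG₁ : ∀ g₁ : G₁, ∃ x ∈ H₁, ∃ z ∈ X.fix, g₁ = x * z) {g₀ : G₀}
    (hg₀ : ∀ h₁ ∈ H₁, X.act g₀ h₁ = h₁) : g₀ ∈ X.stab := fun g₁ => by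
  obtain ⟨x, hx, z, hz, rfl⟩ := hG₁ g₁
  rw [map_mul, hg₀ x hx, hz g₀]

end XMod

/-- if `H : H₁ → H₀` is a subcrossed module of `G : G₁ → G₀` with
`G₁ = H₁ · G₁^{G₀}` and `G₀ = H₀ · (St_{G₀}(G₁) ∩ Z(G₀))`, then
`St_{H₀}(H₁) ∩ Z(H₀) = H₀ ∩ (St_{G₀}(G₁) ∩ Z(G₀))` as subsets of `G₀`. -/
theorem restrict_zstab_eq {G₁ G₀ : Type*} [Group G₁] [Group G₀] (X : XMod G₁ G₀)
    (H₁ : Subgroup G₁) (H₀ : Subgroup G₀)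
    (hd : ∀ h ∈ H₁, X.d h ∈ H₀)
    (hact : ∀ h₀ ∈ H₀, ∀ h₁ ∈ H₁, X.act h₀ h₁ ∈ H₁)
    (hG₁ : ∀ g₁ : G₁, ∃ x ∈ H₁, ∃ z ∈ X.fix, g₁ = x * z)
    (hG₀ : ∀ g₀ : G₀, ∃ x ∈ H₀, ∃ z ∈ X.zstab, g₀ = x * z) :
    Subgroup.map H₀.subtype (X.restrict H₁ H₀ hd hact).zstab = H₀ ⊓ X.zstab := by
  ext g
  constructor
  · rintro ⟨h, ⟨hst, hz⟩, rfl⟩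
    exact ⟨h.2, X.mem_stab_of_forall_mem_eq_mul hG₁ ((X.mem_restrict_stab_iff hd hact).mp hst),
      Subgroup.coe_mem_center_of_forall_eq_mul X.zstab_le_center hG₀ hz⟩
  · rintro ⟨hH, hst, hz⟩
    exact ⟨⟨g, hH⟩, ⟨(X.mem_restrict_stab_iff hd hact).mpr fun h₁ _ => hst h₁,
      Subgroup.mem_center_of_coe_mem_center hz⟩, rfl⟩
end

section
/- Let G : G₁ → G₀ and H : H₁ → H₀ be isoclinic crossed modules, both simply connected (i.e. both boundary maps are surjective). Then the groups G₁ and H₁ are isoclinic. -/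
open scoped commutatorElement

/-! When `d` is surjective, (CM2) says that `G₀` acts on `G₁` by conjugation. Hence the fixed
points are the centre of `G₁`, the displacement subgroup is `[G₁, G₁]`, and the displacement
`ᵈ⁽ˣ⁾y · y⁻¹` is the commutator `⁅x, y⁆`. So `η₁` and `ξ₁` are already an isoclinism of `G₁` and
`H₁`; the compatibility of `η₀` with the boundaries says that if `η₁` matches `x` with `u` then
`η₀` matches `d x` with `d' u`, which is what condition (1) needs. -/

namespace XMod

variable {G₁ G₀ : Type*} [Group G₁] [Group G₀] (X : XMod G₁ G₀)

lemma act_d_mul_inv_eq_commutatorElement (x y : G₁) : X.act (X.d x) y * y⁻¹ = ⁅x, y⁆ := by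
  rw [X.cm2, commutatorElement_def]

lemma commutator_le_disp : commutator G₁ ≤ X.disp := by
  rw [commutator_def, Subgroup.commutator_le]
  intro x _ y _
  rw [← X.act_d_mul_inv_eq_commutatorElement]
  exact X.disp_gen_mem (X.d x) y

variable {X}

lemma fix_eq_center (hX : Function.Surjective X.d) : X.fix = Subgroup.center G₁ := by
  refine le_antisymm X.fix_le_center fun z hz g₀ => ?_
  obtain ⟨g, rfl⟩ := hX g₀
  rw [X.cm2, Subgroup.mem_center_iff.mp hz g, mul_inv_cancel_right]

lemma disp_eq_commutator (hX : Function.Surjective X.d) : X.disp = commutator G₁ := by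
  refine le_antisymm ?_ X.commutator_le_disp
  rw [XMod.disp, Subgroup.closure_le]
  rintro _ ⟨g₀, g₁, rfl⟩
  obtain ⟨g, rfl⟩ := hX g₀
  rw [SetLike.mem_coe, X.act_d_mul_inv_eq_commutatorElement]
  exact mem_commutator_of g g₁

end XMod

lemma IsoclinicGrp.of_eq {M N : Type*} [Group M] [Group N] {A : Subgroup M} {B : Subgroup N}
    [A.Normal] [B.Normal] {S : Subgroup M} {T : Subgroup N}
    (hA : A = Subgroup.center M) (hB : B = Subgroup.center N)
    (hS : S = commutator M) (hT : T = commutator N)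
    (η : M ⧸ A ≃* N ⧸ B) (ξ : S ≃* T)
    (hξ : ∀ (x y : M) (u v : N) (hxy : ⁅x, y⁆ ∈ S),
      η (QuotientGroup.mk x) = QuotientGroup.mk u →
      η (QuotientGroup.mk y) = QuotientGroup.mk v →
      (ξ ⟨⁅x, y⁆, hxy⟩ : N) = ⁅u, v⁆) :
    IsoclinicGrp M N := by
  subst hA hB hS hT
  exact ⟨η, ξ, fun x y u v => hξ x y u v _⟩

/-- if two simply connected crossed modules are isoclinic, then their
top groups are isoclinic. -/
theorem isoclinicGrp_top_of_simplyConnected {G₁ G₀ H₁ H₀ : Type*}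
    [Group G₁] [Group G₀] [Group H₁] [Group H₀]
    (X : XMod G₁ G₀) (Y : XMod H₁ H₀) (h : X.Isoclinic Y)
    (hX : Function.Surjective X.d) (hY : Function.Surjective Y.d) :
    IsoclinicGrp G₁ H₁ := by
  obtain ⟨η₁, η₀, ξ₁, -, hd, -, hact, -⟩ := h
  refine IsoclinicGrp.of_eq (XMod.fix_eq_center hX) (XMod.fix_eq_center hY)
    (XMod.disp_eq_commutator hX) (XMod.disp_eq_commutator hY) η₁ ξ₁
    fun x y u v hxy hu hv => ?_
  have hdu : η₀ (QuotientGroup.mk (X.d x)) = QuotientGroup.mk (Y.d u) :=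
    (hd x).symm.trans (congrArg Y.dbar hu)
  simpa only [XMod.act_d_mul_inv_eq_commutatorElement] using hact y (X.d x) v (Y.d u) hv hdu
end
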